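/- arXiv:2310.12511 — 4 statements merged into one kernel-verified Lean document; each statement's English description precedes it below -/
import Mathlib

section
/- Let G be a k×n matrix over F_q of rank k and let C be the code generated by G. For all integers j, i with 1 ≤ j ≤ k and 0 ≤ i ≤ n, the number of j-dimensional subcodes D of C with support weight χ(D) = i equals the number of (k−j)-dimensional F_q-subspaces U of F_q^k such that exactly n − i of the n columns of G (counted with multiplicity) belong to U. -/
open Matrix Module

/-- The support weight of a subcode `D ⊆ F^n`: the number of coordinate positions
at which some vector of `D` is nonzero. -/
noncomputable def suppWeight {F : Type} [Semiring F] {n : ℕ} (D : Submodule F (Fin n → F)) : ℕ :=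
  Nat.card {idx : Fin n // ∃ c ∈ D, c idx ≠ 0}

/-!
Write `f x = x G`. Since `G` has full row rank, `f` is injective, so the subcodes of `C` are
exactly the images `W G` of the subspaces `W ≤ F^k`, with `dim (W G) = dim W`. Pass to the
orthogonal complement `Wᗮ` for the dot product, a bijection on subspaces of `F^k` with
`dim Wᗮ = k - dim W`. Coordinate `c` vanishes on all of `W G` exactly when column `c` of `G` is
orthogonal to `W`, i.e. lies in `Wᗮ`; hence `χ(W G) + #{c | G_c ∈ Wᗮ} = n`.
-/

open LinearMap (BilinForm)

lemma Submodule.card_subtype_le_range_eq_card_subtype_map {R M N : Type*} [Ring R]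
    [AddCommGroup M] [Module R M] [AddCommGroup N] [Module R N] {f : M →ₗ[R] N}
    (hf : Function.Injective f) (P : Submodule R N → Prop) :
    Nat.card {D : Submodule R N // D ≤ LinearMap.range f ∧ P D} =
      Nat.card {W : Submodule R M // P (W.map f)} :=
  Nat.card_congr
    { toFun D := ⟨D.1.comap f, by rw [map_comap_eq_self D.2.1]; exact D.2.2⟩
      invFun W := ⟨W.1.map f, LinearMap.map_le_range, W.2⟩
      left_inv D := Subtype.ext (map_comap_eq_self D.2.1)
      right_inv W := Subtype.ext (comap_map_eq_of_injective hf W) }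

lemma Function.Involutive.card_subtype_eq {α : Type*} {f : α → α} (hf : Function.Involutive f)
    {P Q : α → Prop} (h : ∀ a, P a ↔ Q (f a)) : Nat.card {a // P a} = Nat.card {a // Q a} :=
  Nat.card_congr ((hf.toPerm f).subtypeEquiv h)

section DotProduct

variable {K ι : Type*} [Field K] [Fintype ι]

lemma Matrix.vecMul_injective_of_rank_eq {κ : Type*} [Fintype κ] {G : Matrix ι κ K}
    (hG : G.rank = Fintype.card ι) : Function.Injective G.vecMul :=
  vecMul_injective_iff.mpr
    (linearIndependent_iff_card_eq_finrank_span.mpr (hG.symm.trans G.rank_eq_finrank_span_row))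

-- `dotProductBilin` typed as a `BilinForm`, so that `BilinForm.orthogonal` applies to it.
variable (K ι) in
def Matrix.dotProductForm : BilinForm K (ι → K) := dotProductBilin K K

@[simp]
lemma Matrix.dotProductForm_apply (x y : ι → K) : dotProductForm K ι x y = x ⬝ᵥ y := rfl

lemma Matrix.dotProductForm_isRefl : (dotProductForm K ι).IsRefl :=
  fun x y h => by simpa [dotProduct_comm] using h

lemma Matrix.dotProductForm_nondegenerate : (dotProductForm K ι).Nondegenerate := by
  classical
  refine (LinearMap.IsRefl.nondegenerate_iff_separatingLeft (B := dotProductForm K ι)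
    dotProductForm_isRefl).mpr fun x hx => ?_
  ext i
  simpa using hx (Pi.single i 1)

lemma Matrix.orthogonal_dotProductForm_involutive :
    Function.Involutive (dotProductForm K ι).orthogonal :=
  LinearMap.BilinForm.orthogonal_orthogonal dotProductForm_nondegenerate dotProductForm_isRefl

lemma Matrix.finrank_orthogonal_dotProductForm (U : Submodule K (ι → K)) :
    finrank K ((dotProductForm K ι).orthogonal U) = Fintype.card ι - finrank K U := by
  rw [LinearMap.BilinForm.finrank_orthogonal dotProductForm_nondegenerate,
    finrank_fintype_fun_eq_card]

end DotProduct

section SupportWeight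

variable {F ι : Type} [Field F] [Fintype ι] {n : ℕ}

lemma exists_mem_map_vecMulLinear_ne_zero_iff (G : Matrix ι (Fin n) F)
    (W : Submodule F (ι → F)) (c : Fin n) :
    (∃ v ∈ W.map G.vecMulLinear, v c ≠ 0) ↔
      (fun r => G r c) ∉ (dotProductForm F ι).orthogonal W := by
  simp [LinearMap.BilinForm.mem_orthogonal_iff, vecMul]

lemma suppWeight_map_vecMulLinear_add_card (G : Matrix ι (Fin n) F) (W : Submodule F (ι → F)) :
    suppWeight (W.map G.vecMulLinear) +
      Nat.card {c : Fin n // (fun r => G r c) ∈ (dotProductForm F ι).orthogonal W} = n := by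
  classical
  rw [suppWeight, Nat.card_eq_fintype_card, Nat.card_eq_fintype_card,
    Fintype.card_congr (Equiv.subtypeEquivRight (exists_mem_map_vecMulLinear_ne_zero_iff G W)),
    Fintype.card_subtype_compl, Nat.sub_add_cancel (Fintype.card_subtype_le _), Fintype.card_fin]

end SupportWeight

theorem stmt_1_general (k n : ℕ) (F : Type) [Field F]
    (G : Matrix (Fin k) (Fin n) F) (hG : G.rank = k)
    (j i : ℕ) (hjk : j ≤ k) (hin : i ≤ n) :
    Nat.card {D : Submodule F (Fin n → F) //
        D ≤ LinearMap.range G.vecMulLinear ∧ Module.finrank F D = j ∧ suppWeight D = i} =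
      Nat.card {U : Submodule F (Fin k → F) //
        Module.finrank F U = k - j ∧ Nat.card {c : Fin n // (fun r => G r c) ∈ U} = n - i} := by
  have hf : Function.Injective G.vecMulLinear :=
    vecMul_injective_of_rank_eq (by rw [hG, Fintype.card_fin])
  rw [Submodule.card_subtype_le_range_eq_card_subtype_map hf]
  refine orthogonal_dotProductForm_involutive.card_subtype_eq fun W => ?_
  have hdim : finrank F (W.map G.vecMulLinear) = finrank F W :=
    (LinearEquiv.finrank_eq (W.equivMapOfInjective _ hf)).symm
  have hdimW : finrank F W ≤ k := by simpa using W.finrank_le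
  have hdimPerp : finrank F ((dotProductForm F (Fin k)).orthogonal W) = k - finrank F W := by
    simpa using finrank_orthogonal_dotProductForm W
  have hsupp := suppWeight_map_vecMulLinear_add_card G W
  rw [hdim, hdimPerp]
  omega

/-- The number of `j`-dimensional subcodes of the code generated by `G` with support
weight `i` equals the number of `(k-j)`-dimensional subspaces of `F^k` containing
exactly `n - i` of the columns of `G` (with multiplicity). -/
theorem stmt_1 (q k n : ℕ) (F : Type) [Field F] [Fintype F]
    (hF : Fintype.card F = q)
    (G : Matrix (Fin k) (Fin n) F) (hG : G.rank = k)
    (j i : ℕ) (hj1 : 1 ≤ j) (hjk : j ≤ k) (hin : i ≤ n) :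
    Nat.card {D : Submodule F (Fin n → F) //
        D ≤ LinearMap.range G.vecMulLinear ∧ Module.finrank F D = j ∧ suppWeight D = i} =
      Nat.card {U : Submodule F (Fin k → F) //
        Module.finrank F U = k - j ∧ Nat.card {c : Fin n // (fun r => G r c) ∈ U} = n - i} :=
  stmt_1_general k n F G hG j i hjk hin
end

section
/- Let k ≥ 1, n = (q^k − 1)/(q − 1), and let G be a k×n matrix over F_q whose columns consist of exactly one nonzero vector from each 1-dimensional subspace of F_q^k (a generator matrix of the q-ary Simplex code). Let ℓ ≥ 1 and let K be a field with q^ℓ elements containing F_q as a subfield. Then for every integer w ≥ 1, the number of codewords of Hamming weight w in the lifted code {xG : x ∈ K^k} ⊆ K^n equals [k, j]_q · (q^ℓ − 1)(q^ℓ − q)⋯(q^ℓ − q^{j−1}) if w = (q^k − q^{k−j})/(q − 1) for some integer j with 1 ≤ j ≤ k, and equals 0 otherwise. -/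
/-!
A vector `x ∈ K^k` is the same as the `F`-linear form `φₓ : F^k → K, v ↦ ∑ vᵢ xᵢ`, and the
`c`-th coordinate of `xG` is `φₓ` evaluated at the `c`-th column of `G`. Since the columns
represent every point of the projective space `P(F^k)` exactly once, the zero coordinates of
`xG` correspond to the points of `P(ker φₓ)`, so `xG` has weight `(q^k - q^d)/(q - 1)` with
`d = dim ker φₓ`. Counting codewords of weight `w` thus amounts to counting linear maps
`F^k → K` whose kernel has codimension `j`: there are `[k, j]_q` choices of kernel (via
annihilators, these are the `j`-dimensional subspaces of the dual), and for each of them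
`(q^ℓ - 1)⋯(q^ℓ - q^{j-1})` injective maps from the `j`-dimensional quotient into `K ≅ F^ℓ`.
-/

open Matrix Module

/-- The Gaussian binomial coefficient `[n, m]_q`:
`((q^n−1)(q^n−q)⋯(q^n−q^{m−1})) / ((q^m−1)(q^m−q)⋯(q^m−q^{m−1}))` for `0 ≤ m ≤ n`,
and `0` for `m < 0` or `m > n`. -/
def gbinom (q : ℕ) (n m : ℤ) : ℕ :=
  if 0 ≤ m ∧ m ≤ n then
    (∏ i ∈ Finset.range m.toNat, (q ^ n.toNat - q ^ i)) /
      (∏ i ∈ Finset.range m.toNat, (q ^ m.toNat - q ^ i))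
  else 0

open Finset

theorem Nat.card_eq_mul_of_card_fiber_eq {α β : Type*} [Finite α] [Finite β] (f : α → β)
    {c : ℕ} (h : ∀ b, Nat.card {a // f a = b} = c) : Nat.card α = Nat.card β * c := by
  have := Fintype.ofFinite β
  rw [← Nat.card_congr (Equiv.sigmaFiberEquiv f), Nat.card_sigma]
  simp [h, Nat.card_eq_fintype_card]

theorem Nat.card_subtype_exists_eq_and {α β : Type*} {f : α → β} (hf : Function.Injective f)
    (p : β → Prop) : Nat.card {b // (∃ a, f a = b) ∧ p b} = Nat.card {a // p (f a)} :=
  Nat.card_congr ((Equiv.subtypeSubtypeEquivSubtypeInter (· ∈ Set.range f) p).symm.trans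
    ((Equiv.ofInjective f hf).subtypeEquiv fun _ => Iff.rfl).symm)

theorem hammingNorm_add_card_eq_zero {ι : Type*} [Fintype ι] {β : ι → Type*}
    [∀ i, DecidableEq (β i)] [∀ i, Zero (β i)] (x : ∀ i, β i) :
    hammingNorm x + Nat.card {i // x i = 0} = Fintype.card ι := by
  classical
  rw [hammingNorm, Nat.card_eq_fintype_card, Fintype.card_subtype, add_comm]
  exact card_filter_add_card_filter_not _

theorem Nat.sub_one_dvd_pow_sub_pow (q : ℕ) {d k : ℕ} (h : d ≤ k) :
    q - 1 ∣ q ^ k - q ^ d := by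
  obtain ⟨e, rfl⟩ := Nat.exists_eq_add_of_le h
  rw [pow_add, ← Nat.mul_sub_one]
  exact (Nat.sub_one_dvd_pow_sub_one q e).mul_left _

theorem Nat.pow_sub_pow_div_sub_one_inj {q d e k : ℕ} (hq : 2 ≤ q) (hd : d ≤ k)
    (he : e ≤ k) : (q ^ k - q ^ d) / (q - 1) = (q ^ k - q ^ e) / (q - 1) ↔ d = e := by
  rw [Nat.div_left_inj (q.sub_one_dvd_pow_sub_pow hd) (q.sub_one_dvd_pow_sub_pow he)]
  have := Nat.pow_le_pow_right (by omega : 0 < q) hd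
  have := Nat.pow_le_pow_right (by omega : 0 < q) he
  exact ⟨fun h => Nat.pow_right_injective hq (show q ^ d = q ^ e by omega), fun h => h ▸ rfl⟩

theorem Module.Basis.constr_injective_iff {R M N ι : Type*} [CommSemiring R] [AddCommMonoid M]
    [Module R M] [AddCommMonoid N] [Module R N] [Fintype ι] (b : Basis ι R M) (s : ι → N) :
    Function.Injective (b.constr R s) ↔ LinearIndependent R s := by
  have : b.constr R s = Fintype.linearCombination R s ∘ₗ b.equivFun.toLinearMap :=
    b.ext fun i => by simp [Fintype.linearCombination_apply]
  rw [this, LinearMap.coe_comp, LinearEquiv.coe_coe, EquivLike.injective_comp,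
    linearIndependent_iff_injective_fintypeLinearCombination]

theorem finrank_ker_le {F M : Type*} [Field F] [AddCommGroup M] [Module F M] {k : ℕ}
    (ψ : (Fin k → F) →ₗ[F] M) : finrank F (LinearMap.ker ψ) ≤ k := by
  simpa using (LinearMap.ker ψ).finrank_le

section FiniteField

variable {F V W : Type*} [Field F] [Fintype F] [AddCommGroup V] [Module F V] [Finite V]
  [AddCommGroup W] [Module F W] [Finite W]

local notation "q" => Fintype.card F

theorem card_linearIndependent_eq_prod_range (m : ℕ) :
    Nat.card {s : Fin m → V // LinearIndependent F s} =
      ∏ i ∈ range m, (q ^ finrank F V - q ^ i) := by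
  rcases le_or_gt m (finrank F V) with hm | hm
  · rw [card_linearIndependent hm, prod_range]
  · have : IsEmpty {s : Fin m → V // LinearIndependent F s} :=
      ⟨fun s => hm.not_ge (by simpa using s.2.fintype_card_le_finrank)⟩
    rw [Nat.card_of_isEmpty, prod_eq_zero (mem_range.2 hm) (by simp)]

theorem card_injective_linearMap :
    Nat.card {ψ : V →ₗ[F] W // Function.Injective ψ} =
      ∏ i ∈ range (finrank F V), (q ^ finrank F W - q ^ i) := by
  let b := Module.finBasis F V
  rw [← card_linearIndependent_eq_prod_range]
  exact Nat.card_congr ((b.constr F).toEquiv.subtypeEquiv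
    fun s => (b.constr_injective_iff s).symm).symm

theorem card_linearMap_ker_eq (U : Submodule F V) :
    Nat.card {ψ : V →ₗ[F] W // LinearMap.ker ψ = U} =
      ∏ i ∈ range (finrank F V - finrank F U), (q ^ finrank F W - q ^ i) := by
  have : Finite (V ⧸ U) := Module.finite_of_finite F
  rw [← U.finrank_quotient_add_finrank, Nat.add_sub_cancel, ← card_injective_linearMap]
  refine Nat.card_congr
    { toFun ψ :=
        ⟨U.liftQ ψ.1 ψ.2.ge, LinearMap.ker_eq_bot.1 (U.ker_liftQ_eq_bot _ _ ψ.2.le)⟩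
      invFun χ := ⟨χ.1 ∘ₗ U.mkQ, by
        rw [LinearMap.ker_comp, LinearMap.ker_eq_bot.2 χ.2, Submodule.comap_bot, U.ker_mkQ]⟩
      left_inv ψ := Subtype.ext (U.liftQ_mkQ _ _)
      right_inv χ := Subtype.ext (U.linearMap_qext rfl) }

instance : Finite (Submodule F V) :=
  Finite.of_injective (fun W => (W : Set V)) SetLike.coe_injective

theorem card_submodule_finrank_eq_mul (m : ℕ) :
    Nat.card {U : Submodule F V // finrank F U = m} * ∏ i ∈ range m, (q ^ m - q ^ i) =
      ∏ i ∈ range m, (q ^ finrank F V - q ^ i) := by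
  let spanOf (s : {s : Fin m → V // LinearIndependent F s}) :
      {U : Submodule F V // finrank F U = m} :=
    ⟨Submodule.span F (Set.range s.1), by simp [finrank_span_eq_card s.2]⟩
  rw [← card_linearIndependent_eq_prod_range, Nat.card_eq_mul_of_card_fiber_eq spanOf]
  -- the independent tuples spanning `U` are exactly the independent tuples of `U`
  rintro ⟨U, rfl⟩
  rw [← card_linearIndependent_eq_prod_range]
  refine Nat.card_congr
    { toFun s := ⟨fun i => ⟨s.1.1 i,
          (congrArg Subtype.val s.2).le (Submodule.subset_span ⟨i, rfl⟩)⟩, s.1.2.of_comp U.subtype⟩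
      invFun t := ⟨⟨U.subtype ∘ t.1, t.2.map' _ U.ker_subtype⟩, Subtype.ext <|
        Submodule.eq_of_le_of_finrank_eq
          (Submodule.span_le.2 (Set.range_subset_iff.2 fun i => (t.1 i).2))
          (spanOf _).2⟩
      left_inv _ := rfl
      right_inv _ := rfl }

theorem card_submodule_finrank_eq_sub_mul {j : ℕ} (hj : j ≤ finrank F V) :
    Nat.card {U : Submodule F V // finrank F U = finrank F V - j} *
        ∏ i ∈ range j, (q ^ j - q ^ i) =
      ∏ i ∈ range j, (q ^ finrank F V - q ^ i) := by
  have : Finite (Dual F V) := Module.finite_of_finite F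
  have e : {U : Submodule F V // finrank F U = finrank F V - j} ≃
      {Φ : Submodule F (Dual F V) // finrank F Φ = j} :=
    (Subspace.orderIsoFiniteDimensional.toEquiv.trans OrderDual.ofDual).subtypeEquiv
      fun U => by
      have := U.finrank_add_finrank_dualAnnihilator_eq
      change _ ↔ finrank F U.dualAnnihilator = j
      omega
  rw [Nat.card_congr e, card_submodule_finrank_eq_mul, Subspace.dual_finrank_eq]

theorem card_submodule_finrank_eq_sub {j : ℕ} (hj : j ≤ finrank F V) :
    Nat.card {U : Submodule F V // finrank F U = finrank F V - j} =
      gbinom q (finrank F V) j := by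
  have hq : 1 < q := Fintype.one_lt_card
  rw [gbinom, if_pos ⟨by positivity, by exact_mod_cast hj⟩, Int.toNat_natCast, Int.toNat_natCast]
  refine (Nat.div_eq_of_eq_mul_left (prod_pos fun i hi => ?_)
    (card_submodule_finrank_eq_sub_mul hj).symm).symm
  exact Nat.sub_pos_of_lt (Nat.pow_lt_pow_right hq (mem_range.1 hi))

theorem card_submodule_le_finrank_eq_one_mul (U : Submodule F V) :
    Nat.card {L : Submodule F V // L ≤ U ∧ finrank F L = 1} * (q - 1) = q ^ finrank F U - 1 := by
  have e : {L : Submodule F U // finrank F L = 1} ≃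
      {L : Submodule F V // L ≤ U ∧ finrank F L = 1} :=
    ((Submodule.MapSubtype.orderIso U).toEquiv.subtypeEquiv fun L => by
      rw [← U.finrank_map_subtype_eq L]; rfl).trans
      (Equiv.subtypeSubtypeEquivSubtypeInter (· ≤ U) (finrank F · = 1))
  simpa [← Nat.card_congr e] using card_submodule_finrank_eq_mul (V := U) 1

theorem card_linearMap_finrank_ker_eq_sub {j : ℕ} (hj : j ≤ finrank F V) :
    Nat.card {ψ : V →ₗ[F] W // finrank F (LinearMap.ker ψ) = finrank F V - j} =
      Nat.card {U : Submodule F V // finrank F U = finrank F V - j} *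
        ∏ i ∈ range j, (q ^ finrank F W - q ^ i) := by
  have : Finite (V →ₗ[F] W) := Module.finite_of_finite F
  refine Nat.card_eq_mul_of_card_fiber_eq (fun ψ => ⟨LinearMap.ker ψ.1, ψ.2⟩)
    fun ⟨U, hU⟩ => ?_
  rw [Nat.card_congr ((Equiv.subtypeEquivRight fun _ => Subtype.ext_iff).trans
    (Equiv.subtypeSubtypeEquivSubtype fun {ψ} (h : LinearMap.ker ψ = U) => h ▸ hU)),
    card_linearMap_ker_eq, hU, Nat.sub_sub_self hj]

end FiniteField

section SimplexCode

variable {F : Type*} [Field F] {k n : ℕ}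

structure IsSimplexGenerator (G : Matrix (Fin k) (Fin n) F) : Prop where
  col_ne_zero : ∀ c, (fun r => G r c) ≠ 0
  existsUnique_col_mem :
    ∀ L : Submodule F (Fin k → F), finrank F L = 1 → ∃! c, (fun r => G r c) ∈ L

theorem vecMul_map_algebraMap_apply {K : Type*} [Field K] [Algebra F K]
    (G : Matrix (Fin k) (Fin n) F) (x : Fin k → K) (c : Fin n) :
    vecMul x (G.map (algebraMap F K)) c =
      (Pi.basisFun F (Fin k)).constr F x (fun r => G r c) := by
  simp [vecMul, dotProduct, Algebra.smul_def, mul_comm]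

namespace IsSimplexGenerator

variable {G : Matrix (Fin k) (Fin n) F}

theorem finrank_span_col (hG : IsSimplexGenerator G) (c : Fin n) :
    finrank F (Submodule.span F {(fun r => G r c : Fin k → F)}) = 1 :=
  finrank_span_singleton (hG.col_ne_zero c)

theorem card_col_mem (hG : IsSimplexGenerator G) (W : Submodule F (Fin k → F)) :
    Nat.card {c // (fun r => G r c) ∈ W} =
      Nat.card {L : Submodule F (Fin k → F) // L ≤ W ∧ finrank F L = 1} := by
  refine Nat.card_congr (Equiv.ofBijective (fun c => ⟨Submodule.span F {fun r => G r c.1},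
    (Submodule.span_singleton_le_iff_mem _ _).2 c.2, hG.finrank_span_col c⟩) ⟨?_, ?_⟩)
  · rintro ⟨c, _⟩ ⟨c', _⟩ h
    exact Subtype.ext <| (hG.existsUnique_col_mem _ (hG.finrank_span_col c)).unique
      (Submodule.mem_span_singleton_self _)
      ((congrArg Subtype.val h).ge (Submodule.mem_span_singleton_self _))
  · rintro ⟨L, hLW, hL⟩
    obtain ⟨c, hc, -⟩ := hG.existsUnique_col_mem L hL
    refine ⟨⟨c, hLW hc⟩, Subtype.ext (Submodule.eq_of_le_of_finrank_eq
      ((Submodule.span_singleton_le_iff_mem _ _).2 hc) ?_)⟩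
    rw [hL, hG.finrank_span_col c]

variable {K : Type*} [Field K] [Algebra F K]

theorem vecMul_map_algebraMap_injective (hG : IsSimplexGenerator G) :
    Function.Injective fun x : Fin k → K => vecMul x (G.map (algebraMap F K)) := by
  intro x y hxy
  funext i
  -- some column is a nonzero multiple `a • eᵢ`, and the codeword has `a • xᵢ` there
  obtain ⟨c, hc, -⟩ := hG.existsUnique_col_mem _
    (finrank_span_singleton (Pi.single_ne_zero_iff.2 one_ne_zero : Pi.single i (1 : F) ≠ 0))
  obtain ⟨a, ha⟩ := Submodule.mem_span_singleton.1 hc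
  have ha0 : a ≠ 0 := by
    rintro rfl
    exact hG.col_ne_zero c (by simp [← ha])
  have hcoord (z : Fin k → K) : vecMul z (G.map (algebraMap F K)) c = a • z i := by
    rw [vecMul_map_algebraMap_apply, ← ha, map_smul, ← Pi.basisFun_apply, Basis.constr_basis]
  have := congrFun hxy c
  simp only [hcoord] at this
  exact smul_right_injective K ha0 this

variable [Fintype F]

theorem card_col_mem_mul (hG : IsSimplexGenerator G) (W : Submodule F (Fin k → F)) :
    Nat.card {c // (fun r => G r c) ∈ W} * (Fintype.card F - 1) =
      Fintype.card F ^ finrank F W - 1 := by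
  rw [hG.card_col_mem, card_submodule_le_finrank_eq_one_mul]

theorem card_mul (hG : IsSimplexGenerator G) :
    n * (Fintype.card F - 1) = Fintype.card F ^ k - 1 := by
  simpa using hG.card_col_mem_mul ⊤

theorem hammingNorm_vecMul_mul [DecidableEq K] (hG : IsSimplexGenerator G) (x : Fin k → K) :
    hammingNorm (vecMul x (G.map (algebraMap F K))) * (Fintype.card F - 1) =
      Fintype.card F ^ k -
        Fintype.card F ^ finrank F (LinearMap.ker ((Pi.basisFun F (Fin k)).constr F x)) := by
  set W := LinearMap.ker ((Pi.basisFun F (Fin k)).constr F x)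
  have hzero : Nat.card {c // vecMul x (G.map (algebraMap F K)) c = 0} * (Fintype.card F - 1) =
      Fintype.card F ^ finrank F W - 1 := by
    simp_rw [vecMul_map_algebraMap_apply, ← LinearMap.mem_ker]
    exact hG.card_col_mem_mul W
  have hsplit := hammingNorm_add_card_eq_zero (vecMul x (G.map (algebraMap F K)))
  have hWk : Fintype.card F ^ finrank F W ≤ Fintype.card F ^ k :=
    Nat.pow_le_pow_right Fintype.card_pos (finrank_ker_le _)
  have := Nat.one_le_pow (finrank F W) _ (Fintype.card_pos (α := F))
  rw [Fintype.card_fin] at hsplit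
  rw [Nat.eq_sub_of_add_eq hsplit, Nat.sub_mul, hzero, hG.card_mul]
  omega

theorem hammingNorm_vecMul_eq [DecidableEq K] (hG : IsSimplexGenerator G) (x : Fin k → K) :
    hammingNorm (vecMul x (G.map (algebraMap F K))) =
      (Fintype.card F ^ k -
          Fintype.card F ^ finrank F (LinearMap.ker ((Pi.basisFun F (Fin k)).constr F x))) /
        (Fintype.card F - 1) :=
  (Nat.div_eq_of_eq_mul_left (Nat.sub_pos_of_lt Fintype.one_lt_card)
    (hG.hammingNorm_vecMul_mul x).symm).symm

theorem card_hammingNorm_vecMul_eq [Finite K] [DecidableEq K] (hG : IsSimplexGenerator G)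
    {j : ℕ} (hj : j ≤ k) :
    Nat.card {x : Fin k → K // hammingNorm (vecMul x (G.map (algebraMap F K))) =
        (Fintype.card F ^ k - Fintype.card F ^ (k - j)) / (Fintype.card F - 1)} =
      gbinom (Fintype.card F) k j *
        ∏ i ∈ range j, (Fintype.card F ^ finrank F K - Fintype.card F ^ i) := by
  have hjk : j ≤ finrank F (Fin k → F) := by simpa using hj
  have hsub := card_submodule_finrank_eq_sub hjk
  have hmaps := card_linearMap_finrank_ker_eq_sub (W := K) hjk
  simp only [finrank_fin_fun] at hsub hmaps
  rw [← hsub, ← hmaps]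
  refine Nat.card_congr (((Pi.basisFun F (Fin k)).constr F).toEquiv.subtypeEquiv fun x => ?_)
  rw [hG.hammingNorm_vecMul_eq,
    Nat.pow_sub_pow_div_sub_one_inj Fintype.one_lt_card (finrank_ker_le _) (Nat.sub_le k j)]
  rfl

end IsSimplexGenerator

end SimplexCode

theorem stmt_2_general (q k n ℓ : ℕ)
    (F K : Type) [Field F] [Fintype F] [Field K] [Fintype K] [DecidableEq K] [Algebra F K]
    (hF : Fintype.card F = q) (hK : Fintype.card K = q ^ ℓ)
    (G : Matrix (Fin k) (Fin n) F)
    (hcol : ∀ c : Fin n, (fun r => G r c) ≠ 0)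
    (hlines : ∀ L : Submodule F (Fin k → F), Module.finrank F L = 1 →
        ∃! c : Fin n, (fun r => G r c) ∈ L)
    (w : ℕ) (hw : 1 ≤ w) :
    (∀ j : ℕ, 1 ≤ j → j ≤ k → w = (q ^ k - q ^ (k - j)) / (q - 1) →
        Nat.card {cw : Fin n → K //
            (∃ x : Fin k → K, Matrix.vecMul x (G.map (algebraMap F K)) = cw) ∧
              hammingNorm cw = w} =
          gbinom q k j * ∏ s ∈ Finset.range j, (q ^ ℓ - q ^ s)) ∧
      ((¬ ∃ j : ℕ, 1 ≤ j ∧ j ≤ k ∧ w = (q ^ k - q ^ (k - j)) / (q - 1)) →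
        Nat.card {cw : Fin n → K //
            (∃ x : Fin k → K, Matrix.vecMul x (G.map (algebraMap F K)) = cw) ∧
              hammingNorm cw = w} = 0) := by
  subst hF
  have hG : IsSimplexGenerator G := ⟨hcol, hlines⟩
  have hfinrank : finrank F K = ℓ :=
    Nat.pow_right_injective Fintype.one_lt_card
      ((card_eq_pow_finrank (K := F) (V := K)).symm.trans hK)
  have hcodewords (v : ℕ) : Nat.card {cw : Fin n → K //
      (∃ x : Fin k → K, vecMul x (G.map (algebraMap F K)) = cw) ∧ hammingNorm cw = v} =
      Nat.card {x : Fin k → K // hammingNorm (vecMul x (G.map (algebraMap F K))) = v} :=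
    Nat.card_subtype_exists_eq_and hG.vecMul_map_algebraMap_injective _
  simp only [hcodewords]
  refine ⟨fun j _ hjk hwj => by rw [hwj, hG.card_hammingNorm_vecMul_eq hjk, hfinrank],
    fun hno => Nat.card_eq_zero.2 (Or.inl ⟨fun ⟨x, hx⟩ => ?_⟩)⟩
  rw [hG.hammingNorm_vecMul_eq] at hx
  set d := finrank F (LinearMap.ker ((Pi.basisFun F (Fin k)).constr F x))
  have hdk : d ≤ k := finrank_ker_le _
  rcases hdk.lt_or_eq with hlt | heq
  · exact hno ⟨k - d, by omega, by omega, by rw [Nat.sub_sub_self hdk, hx]⟩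
  · rw [heq, Nat.sub_self, Nat.zero_div] at hx
    omega

/-- Weight enumerator of the lifted Simplex code: the number of codewords of Hamming
weight `w` in the lifted code over `K` of the `q`-ary Simplex code is
`[k,j]_q (q^ℓ-1)⋯(q^ℓ-q^{j-1})` if `w = (q^k - q^{k-j})/(q-1)` for some `1 ≤ j ≤ k`,
and `0` otherwise. -/
theorem stmt_2 (q k n ℓ : ℕ) (hk : 1 ≤ k) (hℓ : 1 ≤ ℓ)
    (F K : Type) [Field F] [Fintype F] [Field K] [Fintype K] [DecidableEq K] [Algebra F K]
    (hF : Fintype.card F = q) (hK : Fintype.card K = q ^ ℓ)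
    (hn : n = (q ^ k - 1) / (q - 1))
    (G : Matrix (Fin k) (Fin n) F)
    (hcol : ∀ c : Fin n, (fun r => G r c) ≠ 0)
    (hlines : ∀ L : Submodule F (Fin k → F), Module.finrank F L = 1 →
        ∃! c : Fin n, (fun r => G r c) ∈ L)
    (w : ℕ) (hw : 1 ≤ w) :
    (∀ j : ℕ, 1 ≤ j → j ≤ k → w = (q ^ k - q ^ (k - j)) / (q - 1) →
        Nat.card {cw : Fin n → K //
            (∃ x : Fin k → K, Matrix.vecMul x (G.map (algebraMap F K)) = cw) ∧
              hammingNorm cw = w} =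
          gbinom q k j * ∏ s ∈ Finset.range j, (q ^ ℓ - q ^ s)) ∧
      ((¬ ∃ j : ℕ, 1 ≤ j ∧ j ≤ k ∧ w = (q ^ k - q ^ (k - j)) / (q - 1)) →
        Nat.card {cw : Fin n → K //
            (∃ x : Fin k → K, Matrix.vecMul x (G.map (algebraMap F K)) = cw) ∧
              hammingNorm cw = w} = 0) :=
  stmt_2_general q k n ℓ F K hF hK G hcol hlines w hw
end

section
/- Let k ≥ 1, n = (q^k − 1)/(q − 1), and let G be a k×n matrix over F_q whose columns consist of exactly one nonzero vector from each 1-dimensional subspace of F_q^k, generating the q-ary Simplex code S_{q,k}. Then for every integer j with 1 ≤ j ≤ k: every j-dimensional subcode of S_{q,k} has support weight exactly (q^k − q^{k−j})/(q − 1); the number of j-dimensional subcodes of S_{q,k} equals [k, j]_q; and consequently the j-th generalized Hamming weight satisfies d_j(S_{q,k}) = (q^k − q^{k−j})/(q − 1). -/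
open Matrix Module

/-!
The map `x ↦ x G` is injective because the columns of `G` span `F^k`, so the `j`-dimensional
subcodes are the images of the `j`-dimensional subspaces `U ≤ F^k`, and there are `[k, j]_q` of
those (count ordered bases). Coordinate `c` vanishes on the image of `U` exactly when column `c`
lies in `U^⊥`, a subspace of dimension `k - j`. The columns represent each point of projective
space once, so `(q^(k-j) - 1)/(q - 1)` of them lie in `U^⊥`, and the weight of every
`j`-dimensional subcode is `n` minus this.
-/

section LineTransversal

variable {F V ι : Type*} [Field F] [AddCommGroup V] [Module F V] {v : ι → V}

theorem span_range_eq_top_of_forall_line (hv : ∀ i, v i ≠ 0)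
    (hlines : ∀ L : Submodule F V, finrank F L = 1 → ∃ i, v i ∈ L) :
    Submodule.span F (Set.range v) = ⊤ := by
  refine Submodule.eq_top_iff'.2 fun x => ?_
  rcases eq_or_ne x 0 with rfl | hx
  · exact zero_mem _
  obtain ⟨i, hi⟩ := hlines _ (finrank_span_singleton hx)
  obtain ⟨a, ha⟩ := Submodule.mem_span_singleton.1 hi
  have ha0 : a ≠ 0 := by
    rintro rfl
    exact hv i (by rw [← ha, zero_smul])
  rw [← inv_smul_smul₀ ha0 x, ha]
  exact Submodule.smul_mem _ _ (Submodule.subset_span ⟨i, rfl⟩)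

theorem bijective_mk_of_forall_existsUnique (hv : ∀ i, v i ≠ 0)
    (hlines : ∀ L : Submodule F V, finrank F L = 1 → ∃! i, v i ∈ L) (O : Submodule F V) :
    Function.Bijective fun i : {i // v i ∈ O} =>
      Projectivization.mk F (⟨v i, i.2⟩ : O) (by simpa using hv i) := by
  constructor
  · rintro ⟨i, hi⟩ ⟨i', hi'⟩ h
    obtain ⟨a, ha⟩ := (Projectivization.mk_eq_mk_iff' F _ _ _ _).1 h
    have hii' : v i ∈ F ∙ v i' :=
      Submodule.mem_span_singleton.2 ⟨a, congrArg Subtype.val ha⟩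
    exact Subtype.ext ((hlines _ (finrank_span_singleton (hv i'))).unique hii'
      (Submodule.mem_span_singleton_self _))
  · refine Projectivization.ind fun w hw => ?_
    have hw' : (w : V) ≠ 0 := by simpa using hw
    obtain ⟨i, hi, -⟩ := hlines _ (finrank_span_singleton hw')
    obtain ⟨a, ha⟩ := Submodule.mem_span_singleton.1 hi
    have hiO : v i ∈ O := ha ▸ O.smul_mem a w.2
    exact ⟨⟨i, hiO⟩, (Projectivization.mk_eq_mk_iff' F _ _ _ _).2 ⟨a, Subtype.ext ha⟩⟩

theorem natCard_subtype_mem_mul [Fintype F] [Finite V] (hv : ∀ i, v i ≠ 0)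
    (hlines : ∀ L : Submodule F V, finrank F L = 1 → ∃! i, v i ∈ L) (O : Submodule F V) :
    Nat.card {i // v i ∈ O} * (Fintype.card F - 1) = Fintype.card F ^ finrank F O - 1 := by
  rw [Nat.card_congr (Equiv.ofBijective _ (bijective_mk_of_forall_existsUnique hv hlines O)),
    Fintype.card_eq_nat_card, ← Projectivization.card F O, Module.natCard_eq_pow_finrank (K := F)]

end LineTransversal

theorem gbinom_of_le (q : ℕ) {k j : ℕ} (h : j ≤ k) :
    gbinom q k j =
      (∏ i : Fin j, (q ^ k - q ^ (i : ℕ))) / ∏ i : Fin j, (q ^ j - q ^ (i : ℕ)) := by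
  simp [gbinom, h, Finset.prod_range]

theorem gbinom_of_lt (q : ℕ) {k j : ℕ} (h : k < j) : gbinom q k j = 0 := by
  simp [gbinom, h.not_ge]

section SubspaceCount

variable {F V : Type*} [Field F] [Fintype F] [AddCommGroup V] [Module F V] [Finite V]

theorem natCard_linearIndependent_span_eq {j : ℕ} (W : Submodule F V) (hW : finrank F W = j) :
    Nat.card {s : {s : Fin j → V // LinearIndependent F s} //
        Submodule.span F (Set.range s.1) = W} =
      ∏ i : Fin j, (Fintype.card F ^ j - Fintype.card F ^ (i : ℕ)) := by
  have e : {s : {s : Fin j → V // LinearIndependent F s} // Submodule.span F (Set.range s.1) = W}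
      ≃ {t : Fin j → W // LinearIndependent F t} :=
    { toFun s := ⟨fun i => ⟨s.1.1 i, s.2.le (Submodule.subset_span ⟨i, rfl⟩)⟩,
        .of_comp W.subtype s.1.2⟩
      invFun t := ⟨⟨W.subtype ∘ t.1, t.2.map' W.subtype W.ker_subtype⟩, by
        rw [Set.range_comp, ← Submodule.map_span,
          t.2.span_eq_top_of_card_eq_finrank' (by simp [hW]), Submodule.map_top,
          Submodule.range_subtype]⟩
      left_inv _ := rfl
      right_inv _ := rfl }
  rw [Nat.card_congr e, card_linearIndependent hW.ge, hW]

theorem natCard_finrank_eq_mul_prod {j : ℕ} (hj : j ≤ finrank F V) :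
    Nat.card {W : Submodule F V // finrank F W = j} *
        ∏ i : Fin j, (Fintype.card F ^ j - Fintype.card F ^ (i : ℕ)) =
      ∏ i : Fin j, (Fintype.card F ^ finrank F V - Fintype.card F ^ (i : ℕ)) := by
  classical
  let span (s : {s : Fin j → V // LinearIndependent F s}) :
      {W : Submodule F V // finrank F W = j} :=
    ⟨Submodule.span F (Set.range s.1), by rw [finrank_span_eq_card s.2, Fintype.card_fin]⟩
  have hfiber (W) : Nat.card {s // span s = W} =
      ∏ i : Fin j, (Fintype.card F ^ j - Fintype.card F ^ (i : ℕ)) := by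
    rw [← natCard_linearIndependent_span_eq W.1 W.2]
    exact Nat.card_congr (Equiv.subtypeEquivRight fun s => Subtype.ext_iff)
  have : Fintype {W : Submodule F V // finrank F W = j} := Fintype.ofFinite _
  have hsigma := Nat.card_congr (Equiv.sigmaFiberEquiv span)
  rw [card_linearIndependent hj, Nat.card_sigma, Finset.sum_congr rfl fun W _ => hfiber W] at hsigma
  simpa [Nat.card_eq_fintype_card] using hsigma

theorem natCard_finrank_eq_gbinom (j : ℕ) :
    Nat.card {W : Submodule F V // finrank F W = j} = gbinom (Fintype.card F) (finrank F V) j := by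
  rcases le_or_gt j (finrank F V) with hj | hj
  · have hq : 1 < Fintype.card F := Fintype.one_lt_card
    have hpos : 0 < ∏ i : Fin j, (Fintype.card F ^ j - Fintype.card F ^ (i : ℕ)) :=
      Finset.prod_pos fun i _ => Nat.sub_pos_of_lt (Nat.pow_lt_pow_right hq i.2)
    rw [gbinom_of_le _ hj, ← natCard_finrank_eq_mul_prod hj, Nat.mul_div_cancel _ hpos]
  · have : IsEmpty {W : Submodule F V // finrank F W = j} :=
      ⟨fun W => (Submodule.finrank_le W.1).not_gt (W.2.symm ▸ hj)⟩
    rw [Nat.card_of_isEmpty, gbinom_of_lt _ hj]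

end SubspaceCount

section InjectiveMap

variable {K V W : Type*} [Field K] [AddCommGroup V] [Module K V] [AddCommGroup W] [Module K W]
  {f : V →ₗ[K] W}

theorem finrank_comap_of_le_range (hf : Function.Injective f) {D : Submodule K W}
    (hD : D ≤ LinearMap.range f) : finrank K (D.comap f) = finrank K D := by
  conv_rhs => rw [← Submodule.map_comap_eq_self hD]
  exact (Submodule.equivMapOfInjective f hf _).finrank_eq

noncomputable def finrankEqEquivOfInjective (hf : Function.Injective f) (j : ℕ) :
    {D : Submodule K W // D ≤ LinearMap.range f ∧ finrank K D = j} ≃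
      {U : Submodule K V // finrank K U = j} where
  toFun D := ⟨D.1.comap f, (finrank_comap_of_le_range hf D.2.1).trans D.2.2⟩
  invFun U := ⟨U.1.map f, LinearMap.map_le_range,
    (Submodule.equivMapOfInjective f hf _).finrank_eq.symm.trans U.2⟩
  left_inv D := Subtype.ext (Submodule.map_comap_eq_self D.2.1)
  right_inv U := Subtype.ext (Submodule.comap_map_eq_of_injective hf U.1)

theorem exists_finrank_eq [FiniteDimensional K V] {j : ℕ} (hj : j ≤ finrank K V) :
    ∃ U : Submodule K V, finrank K U = j := by
  obtain ⟨s, hs⟩ := exists_linearIndependent_of_le_finrank hj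
  exact ⟨Submodule.span K (Set.range s), by rw [finrank_span_eq_card hs, Fintype.card_fin]⟩

end InjectiveMap

section DotProduct

variable {F : Type*} [Field F] {m : Type*} [Fintype m]

theorem nondegenerate_dotProductBilin :
    LinearMap.BilinForm.Nondegenerate (dotProductBilin F F : LinearMap.BilinForm F (m → F)) := by
  classical
  refine (LinearMap.IsRefl.nondegenerate_iff_separatingLeft fun x y h => ?_).2 fun x hx => ?_
  · simpa [dotProduct_comm] using h
  · funext i
    simpa using hx (Pi.single i 1)

theorem vecMulLinear_injective_of_span_eq_top {n : Type*} {M : Matrix m n F}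
    (h : Submodule.span F (Set.range Mᵀ) = ⊤) : Function.Injective M.vecMulLinear := by
  refine (injective_iff_map_eq_zero _).2 fun x hx => nondegenerate_dotProductBilin.1 x fun y => ?_
  have : dotProductBilin F F x = 0 := LinearMap.ext_on_range h fun c => congrFun hx c
  exact LinearMap.congr_fun this y

theorem exists_mem_map_vecMulLinear_ne_zero_iff_s3 {n : Type*} (M : Matrix m n F)
    (U : Submodule F (m → F)) (c : n) :
    (∃ y ∈ U.map M.vecMulLinear, y c ≠ 0) ↔
      Mᵀ c ∉ LinearMap.BilinForm.orthogonal (dotProductBilin F F) U := by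
  simp only [LinearMap.BilinForm.mem_orthogonal_iff, Submodule.mem_map, not_forall]
  exact ⟨fun ⟨_, ⟨x, hx, rfl⟩, hc⟩ => ⟨x, hx, hc⟩,
    fun ⟨x, hx, hc⟩ => ⟨_, ⟨x, hx, rfl⟩, hc⟩⟩

end DotProduct

section SimplexCode

variable {F : Type} [Field F] {m : Type*} [Fintype m] {n : ℕ}

theorem suppWeight_map_vecMulLinear_add (M : Matrix m (Fin n) F) (U : Submodule F (m → F)) :
    suppWeight (U.map M.vecMulLinear) +
      Nat.card {c // Mᵀ c ∈ LinearMap.BilinForm.orthogonal (dotProductBilin F F) U} = n := by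
  classical
  rw [suppWeight, Nat.card_congr (Equiv.subtypeEquivRight
      (exists_mem_map_vecMulLinear_ne_zero_iff_s3 M U)), add_comm, ← Nat.card_sum,
    Nat.card_congr (Equiv.sumCompl _), Nat.card_eq_fintype_card, Fintype.card_fin]

variable [Fintype F] {k : ℕ} {G : Matrix (Fin k) (Fin n) F}

theorem suppWeight_map_vecMulLinear_mul (hcol : ∀ c, Gᵀ c ≠ 0)
    (hlines : ∀ L : Submodule F (Fin k → F), finrank F L = 1 → ∃! c, Gᵀ c ∈ L)
    (U : Submodule F (Fin k → F)) :
    suppWeight (U.map G.vecMulLinear) * (Fintype.card F - 1) =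
      Fintype.card F ^ k - Fintype.card F ^ (k - finrank F U) := by
  have hall := natCard_subtype_mem_mul hcol hlines ⊤
  have horth := natCard_subtype_mem_mul hcol hlines
    (LinearMap.BilinForm.orthogonal (dotProductBilin F F) U)
  rw [LinearMap.BilinForm.finrank_orthogonal nondegenerate_dotProductBilin,
    finrank_fin_fun] at horth
  simp only [Submodule.mem_top, Nat.card_eq_fintype_card, Fintype.card_subtype_true,
    Fintype.card_fin, finrank_top, finrank_fintype_fun_eq_card] at hall
  rw [← suppWeight_map_vecMulLinear_add G U, add_mul, horth] at hall
  have : 1 ≤ Fintype.card F ^ (k - finrank F U) := Nat.one_le_pow _ _ Fintype.card_pos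
  omega

end SimplexCode

theorem stmt_3_general (q k n : ℕ)
    (F : Type) [Field F] [Fintype F] (hF : Fintype.card F = q)
    (G : Matrix (Fin k) (Fin n) F)
    (hcol : ∀ c : Fin n, (fun r => G r c) ≠ 0)
    (hlines : ∀ L : Submodule F (Fin k → F), Module.finrank F L = 1 →
        ∃! c : Fin n, (fun r => G r c) ∈ L)
    (j : ℕ) (hjk : j ≤ k) :
    (∀ D : Submodule F (Fin n → F), D ≤ LinearMap.range G.vecMulLinear →
        Module.finrank F D = j → suppWeight D = (q ^ k - q ^ (k - j)) / (q - 1)) ∧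
    Nat.card {D : Submodule F (Fin n → F) //
        D ≤ LinearMap.range G.vecMulLinear ∧ Module.finrank F D = j} = gbinom q k j ∧
    sInf {w | ∃ D : Submodule F (Fin n → F),
        D ≤ LinearMap.range G.vecMulLinear ∧ Module.finrank F D = j ∧ suppWeight D = w}
      = (q ^ k - q ^ (k - j)) / (q - 1) := by
  subst hF
  have hinj : Function.Injective G.vecMulLinear := vecMulLinear_injective_of_span_eq_top
    (span_range_eq_top_of_forall_line hcol fun L hL => (hlines L hL).exists)
  have hweight (D : Submodule F (Fin n → F)) (hD : D ≤ LinearMap.range G.vecMulLinear)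
      (hDj : finrank F D = j) :
      suppWeight D = (Fintype.card F ^ k - Fintype.card F ^ (k - j)) / (Fintype.card F - 1) := by
    have hq : 0 < Fintype.card F - 1 := Nat.sub_pos_of_lt Fintype.one_lt_card
    rw [← Submodule.map_comap_eq_self hD, ← hDj, ← finrank_comap_of_le_range hinj hD,
      ← suppWeight_map_vecMulLinear_mul hcol hlines, Nat.mul_div_cancel _ hq]
  refine ⟨hweight, ?_, ?_⟩
  · rw [Nat.card_congr (finrankEqEquivOfInjective hinj j), natCard_finrank_eq_gbinom,
      finrank_fin_fun]
  · obtain ⟨U, hU⟩ := exists_finrank_eq (hjk.trans_eq (finrank_fin_fun F).symm)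
    obtain ⟨D, hD⟩ := (finrankEqEquivOfInjective hinj j).symm ⟨U, hU⟩
    rw [show {w | ∃ D : Submodule F (Fin n → F), D ≤ LinearMap.range G.vecMulLinear ∧
        finrank F D = j ∧ suppWeight D = w} = {_} from
      Set.eq_singleton_iff_unique_mem.2 ⟨⟨D, hD.1, hD.2, hweight D hD.1 hD.2⟩,
        fun _ ⟨D, hD, hDj, hw⟩ => hw ▸ hweight D hD hDj⟩, csInf_singleton]

/-- For the `q`-ary Simplex code `S_{q,k}` and `1 ≤ j ≤ k`: every `j`-dimensional subcode
has support weight `(q^k - q^{k-j})/(q-1)`; the number of `j`-dimensional subcodes is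
`[k,j]_q`; and the `j`-th generalized Hamming weight is `(q^k - q^{k-j})/(q-1)`. -/
theorem stmt_3 (q k n : ℕ) (hk : 1 ≤ k)
    (F : Type) [Field F] [Fintype F] (hF : Fintype.card F = q)
    (hn : n = (q ^ k - 1) / (q - 1))
    (G : Matrix (Fin k) (Fin n) F)
    (hcol : ∀ c : Fin n, (fun r => G r c) ≠ 0)
    (hlines : ∀ L : Submodule F (Fin k → F), Module.finrank F L = 1 →
        ∃! c : Fin n, (fun r => G r c) ∈ L)
    (j : ℕ) (hj1 : 1 ≤ j) (hjk : j ≤ k) :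
    (∀ D : Submodule F (Fin n → F), D ≤ LinearMap.range G.vecMulLinear →
        Module.finrank F D = j → suppWeight D = (q ^ k - q ^ (k - j)) / (q - 1)) ∧
    Nat.card {D : Submodule F (Fin n → F) //
        D ≤ LinearMap.range G.vecMulLinear ∧ Module.finrank F D = j} = gbinom q k j ∧
    sInf {w | ∃ D : Submodule F (Fin n → F),
        D ≤ LinearMap.range G.vecMulLinear ∧ Module.finrank F D = j ∧ suppWeight D = w}
      = (q ^ k - q ^ (k - j)) / (q - 1) :=
  stmt_3_general q k n F hF G hcol hlines j hjk
end

section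
/- For every integer j with 1 ≤ j ≤ k, the j-th generalized Hamming weight of C satisfies d_j(C) = q^k − q^u − q^{k−j} + q^{u−j} if 1 ≤ j ≤ u, and d_j(C) = q^k − q^u − q^{k−j} + 1 if u ≤ j ≤ k (equivalently, d_j(C) = q^k − q^u − q^{k−j} + q^{max(u−j, 0)} for all 1 ≤ j ≤ k). -/
open Matrix Module

/-!
Since the columns of `G` are the points outside the proper subspace `S`, they span `F^k`, so
`x ↦ xG` is injective and the `j`-dimensional subcodes are the images of the `j`-dimensional
`W ≤ F^k`. Coordinate `c` lies in the support of the image of `W` iff the column `g_c` is not in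
the dot-product orthogonal `Wᗮ`, so the support weight counts the points outside `S ∪ Wᗮ`:
it is `q^k - q^u - q^(k-j) + q^dim(S ⊓ Wᗮ)`. By the dimension formula `dim(S ⊓ Wᗮ) ≥ u - j`,
and equality holds for `Wᗮ` spanned by a `(u - j)`-dimensional subspace of `S` together with a
subspace of a complement of `S`.
-/

open Function Set Submodule

namespace Submodule

section DivisionRing

variable {K V : Type*} [DivisionRing K] [AddCommGroup V] [Module K V]

theorem exists_le_finrank_eq (P : Submodule K V) {m : ℕ} (hm : m ≤ finrank K P) :
    ∃ A ≤ P, finrank K A = m := by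
  obtain ⟨f, hf⟩ := exists_linearIndependent_of_le_finrank hm
  refine ⟨(span K (range f)).map P.subtype, map_subtype_le _ _, ?_⟩
  rw [finrank_map_subtype_eq, finrank_span_eq_card hf, Fintype.card_fin]

variable [FiniteDimensional K V]

theorem finrank_add_finrank_le_finrank_add_finrank_inf (S T : Submodule K V) :
    finrank K S + finrank K T ≤ finrank K V + finrank K ↥(S ⊓ T) := by
  rw [← finrank_sup_add_finrank_inf_eq]
  exact Nat.add_le_add_right (finrank_le _) _

theorem exists_finrank_eq_finrank_inf_eq (S : Submodule K V) {a b : ℕ}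
    (ha : a ≤ finrank K S) (hb : finrank K S + b ≤ finrank K V) :
    ∃ T : Submodule K V, finrank K T = a + b ∧ finrank K ↥(S ⊓ T) = a := by
  obtain ⟨S', hSS'⟩ := exists_isCompl S
  have hS' : finrank K S + finrank K S' = finrank K V := finrank_add_eq_of_isCompl hSS'
  obtain ⟨A, hAS, hA⟩ := S.exists_le_finrank_eq ha
  obtain ⟨B, hBS', hB⟩ := S'.exists_le_finrank_eq (m := b) (by omega)
  have hSB : S ⊓ B = ⊥ := eq_bot_iff.2 <| (inf_le_inf_left S hBS').trans hSS'.inf_eq_bot.le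
  have hAB : A ⊓ B = ⊥ := eq_bot_iff.2 <| (inf_le_inf_right B hAS).trans hSB.le
  refine ⟨A ⊔ B, ?_, ?_⟩
  · have := finrank_sup_add_finrank_inf_eq A B
    rw [hAB, finrank_bot, hA, hB] at this
    omega
  · rw [inf_comm, sup_inf_assoc_of_le B hAS, inf_comm, hSB, sup_bot_eq, hA]

end DivisionRing

theorem span_compl_eq_top {R M : Type*} [Ring R] [AddCommGroup M] [Module R M]
    {S : Submodule R M} (hS : S ≠ ⊤) : span R (S : Set M)ᶜ = ⊤ := by
  obtain ⟨w, hw⟩ : ∃ w, w ∉ S := by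
    by_contra! h
    exact hS (eq_top_iff'.2 h)
  refine eq_top_iff'.2 fun v => ?_
  by_cases hv : v ∈ S
  · have hvw : v + w ∉ S := fun h => hw (by simpa using S.sub_mem h hv)
    simpa using sub_mem (subset_span hvw : v + w ∈ span R (S : Set M)ᶜ) (subset_span hw)
  · exact subset_span hv

theorem ncard_compl_union_add {F V : Type*} [Field F] [Finite F] [AddCommGroup V] [Module F V]
    [FiniteDimensional F V] (S T : Submodule F V) :
    ((S ∪ T : Set V)ᶜ).ncard + Nat.card F ^ finrank F S + Nat.card F ^ finrank F T
      = Nat.card F ^ finrank F V + Nat.card F ^ finrank F ↥(S ⊓ T) := by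
  have : Finite V := Module.finite_of_finite F
  have card_eq (P : Submodule F V) : (P : Set V).ncard = Nat.card F ^ finrank F P := by
    rw [← Nat.card_coe_set_eq, SetLike.coe_sort_coe, natCard_eq_pow_finrank (K := F)]
  have hcompl := ncard_add_ncard_compl (S ∪ T : Set V)
  have hunion := ncard_union_add_ncard_inter (S : Set V) T
  rw [← coe_inf, card_eq, card_eq, card_eq] at hunion
  rw [natCard_eq_pow_finrank (K := F)] at hcompl
  omega

end Submodule

section DotOrthogonal

variable {F ι : Type*} [Field F] [Fintype ι]

def dotOrthogonal (W : Submodule F (ι → F)) : Submodule F (ι → F) :=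
  LinearMap.BilinForm.orthogonal (dotProductBilin F F) W

theorem mem_dotOrthogonal {W : Submodule F (ι → F)} {v : ι → F} :
    v ∈ dotOrthogonal W ↔ ∀ x ∈ W, x ⬝ᵥ v = 0 :=
  Iff.rfl

theorem dotProductBilin_nondegenerate :
    LinearMap.BilinForm.Nondegenerate (dotProductBilin F F : LinearMap.BilinForm F (ι → F)) :=
  ⟨fun x h => dotProduct_eq_zero x h,
    fun y h => dotProduct_eq_zero y fun x => (dotProduct_comm y x).trans (h x)⟩

theorem dotProductBilin_isRefl :
    LinearMap.BilinForm.IsRefl (dotProductBilin F F : LinearMap.BilinForm F (ι → F)) :=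
  fun x y h => (dotProduct_comm y x).trans h

theorem finrank_dotOrthogonal (W : Submodule F (ι → F)) :
    finrank F (dotOrthogonal W) = Fintype.card ι - finrank F W := by
  rw [dotOrthogonal, LinearMap.BilinForm.finrank_orthogonal dotProductBilin_nondegenerate,
    finrank_fintype_fun_eq_card]

theorem dotOrthogonal_dotOrthogonal (W : Submodule F (ι → F)) :
    dotOrthogonal (dotOrthogonal W) = W :=
  LinearMap.BilinForm.orthogonal_orthogonal dotProductBilin_nondegenerate
    dotProductBilin_isRefl W

theorem finrank_sub_le_finrank_inf_dotOrthogonal (S W : Submodule F (ι → F)) :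
    finrank F S - finrank F W ≤ finrank F ↥(S ⊓ dotOrthogonal W) := by
  have hdim := finrank_add_finrank_le_finrank_add_finrank_inf S (dotOrthogonal W)
  have hW := W.finrank_le
  rw [finrank_dotOrthogonal, finrank_fintype_fun_eq_card] at hdim
  rw [finrank_fintype_fun_eq_card] at hW
  omega

theorem exists_finrank_eq_finrank_inf_dotOrthogonal_eq (S : Submodule F (ι → F)) {j : ℕ}
    (hj : j ≤ Fintype.card ι) :
    ∃ W : Submodule F (ι → F),
      finrank F W = j ∧ finrank F ↥(S ⊓ dotOrthogonal W) = finrank F S - j := by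
  have hS := S.finrank_le
  rw [finrank_fintype_fun_eq_card] at hS
  obtain ⟨T, hT, hST⟩ := S.exists_finrank_eq_finrank_inf_eq (a := finrank F S - j)
    (b := Fintype.card ι - j - (finrank F S - j)) (by omega)
    (by rw [finrank_fintype_fun_eq_card]; omega)
  refine ⟨dotOrthogonal T, ?_, by rwa [dotOrthogonal_dotOrthogonal]⟩
  rw [finrank_dotOrthogonal, hT]
  omega

end DotOrthogonal

theorem Matrix.vecMulLinear_injective_of_span_cols_eq_top {R ι κ : Type*} [CommRing R]
    [Fintype ι] {G : Matrix ι κ R} (hG : span R (range Gᵀ) = ⊤) :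
    Injective G.vecMulLinear := by
  refine (injective_iff_map_eq_zero _).2 fun x hx => dotProduct_eq_zero x fun w => ?_
  have hcols : range Gᵀ ⊆ LinearMap.ker (dotProductBilin R R x) := by
    rintro _ ⟨c, rfl⟩
    exact congrFun hx c
  exact span_le.2 hcols (hG ▸ mem_top : w ∈ span R (range Gᵀ))

theorem suppWeight_map_vecMulLinear {F : Type} [Field F] {ι : Type*} [Fintype ι] {n : ℕ}
    (G : Matrix ι (Fin n) F) (W : Submodule F (ι → F)) :
    suppWeight (W.map G.vecMulLinear) = Nat.card {c : Fin n // Gᵀ c ∉ dotOrthogonal W} := by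
  refine Nat.card_congr (Equiv.subtypeEquivRight fun c => ?_)
  simp only [mem_map, mem_dotOrthogonal, not_forall]
  constructor
  · rintro ⟨_, ⟨x, hx, rfl⟩, hxc⟩
    exact ⟨x, hx, hxc⟩
  · rintro ⟨x, hx, hxc⟩
    exact ⟨_, ⟨x, hx, rfl⟩, hxc⟩

theorem suppWeight_map_vecMulLinear_add_of_range_eq_compl {F : Type} [Field F] [Finite F]
    {ι : Type*} [Fintype ι] {n : ℕ} {S : Submodule F (ι → F)} {G : Matrix ι (Fin n) F}
    (hinj : Injective Gᵀ) (hran : range Gᵀ = (S : Set (ι → F))ᶜ) (W : Submodule F (ι → F)) :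
    suppWeight (W.map G.vecMulLinear) + Nat.card F ^ finrank F S
        + Nat.card F ^ (Fintype.card ι - finrank F W)
      = Nat.card F ^ Fintype.card ι + Nat.card F ^ finrank F ↥(S ⊓ dotOrthogonal W) := by
  have hpreimage : Gᵀ ⁻¹' (S ∪ dotOrthogonal W : Set (ι → F))ᶜ = {c | Gᵀ c ∉ dotOrthogonal W} := by
    ext c
    have hc : Gᵀ c ∉ S := by simpa [hran] using mem_range_self (f := Gᵀ) c
    exact ⟨fun h hT => h (Or.inr hT), fun h hST => hST.elim hc h⟩
  have hcard :
      suppWeight (W.map G.vecMulLinear) = ((S ∪ dotOrthogonal W : Set (ι → F))ᶜ).ncard := by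
    rw [suppWeight_map_vecMulLinear, ← ncard_preimage_of_injective_subset_range hinj, hpreimage]
    exacts [Nat.card_coe_set_eq _, hran ▸ compl_subset_compl.2 subset_union_left]
  rw [hcard, ← finrank_dotOrthogonal, ← finrank_fintype_fun_eq_card (R := F)]
  exact ncard_compl_union_add S _

theorem stmt_8_general (q k n u : ℕ) (huk : u ≤ k - 1)
    (F : Type) [Field F] [Fintype F] (hF : Fintype.card F = q)
    (S : Submodule F (Fin k → F)) (hS : Module.finrank F S = u)
    (G : Matrix (Fin k) (Fin n) F)
    (hinj : Function.Injective fun c : Fin n => (fun r => G r c))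
    (hran : Set.range (fun c : Fin n => (fun r => G r c)) = (S : Set (Fin k → F))ᶜ)
    (j : ℕ) (hj1 : 1 ≤ j) (hjk : j ≤ k) :
    (sInf {w | ∃ D : Submodule F (Fin n → F),
        D ≤ LinearMap.range G.vecMulLinear ∧ Module.finrank F D = j ∧ suppWeight D = w} : ℤ)
      = (q : ℤ) ^ k - (q : ℤ) ^ u - (q : ℤ) ^ (k - j) + (q : ℤ) ^ (u - j) := by
  have hweight (W : Submodule F (Fin k → F)) : (suppWeight (W.map G.vecMulLinear) : ℤ)
      = q ^ k - q ^ u - q ^ (k - finrank F W) + q ^ finrank F ↥(S ⊓ dotOrthogonal W) := by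
    have h := suppWeight_map_vecMulLinear_add_of_range_eq_compl hinj hran W
    rw [Nat.card_eq_fintype_card, hF, hS, Fintype.card_fin] at h
    have h' := congrArg (Nat.cast : ℕ → ℤ) h
    push_cast at h'
    linarith
  have hS_ne_top : S ≠ ⊤ := fun h => by
    rw [h, finrank_top, finrank_fin_fun] at hS
    omega
  have henc : Injective G.vecMulLinear :=
    vecMulLinear_injective_of_span_cols_eq_top (hran ▸ span_compl_eq_top hS_ne_top)
  have hrank (W : Submodule F (Fin k → F)) : finrank F (W.map G.vecMulLinear) = finrank F W :=
    (equivMapOfInjective _ henc W).finrank_eq.symm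
  refine IsLeast.csInf_eq ⟨?_, ?_⟩
  · obtain ⟨W, hW, hSW⟩ :=
      exists_finrank_eq_finrank_inf_dotOrthogonal_eq S (j := j) (by simpa using hjk)
    exact ⟨_, LinearMap.map_le_range, (hrank W).trans hW, by rw [hweight, hW, hSW, hS]⟩
  · rintro _ ⟨D, hD, rfl, rfl⟩
    obtain ⟨W, rfl⟩ : ∃ W : Submodule F (Fin k → F), W.map G.vecMulLinear = D :=
      ⟨_, map_comap_eq_self hD⟩
    have hdim := finrank_sub_le_finrank_inf_dotOrthogonal S W
    rw [hweight, hrank, ← hS]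
    gcongr
    exact_mod_cast hF ▸ Fintype.card_pos

/-- Weight hierarchy of the Solomon–Stiffler code with `p = 1`: for `1 ≤ j ≤ k`,
the `j`-th generalized Hamming weight of `C` equals
`q^k - q^u - q^{k-j} + q^{max(u-j,0)}` (note `u - j` below is truncated
subtraction, so `q^(u-j) = q^{max(u-j,0)}`). -/
theorem stmt_8 (q k n u : ℕ) (hk : 2 ≤ k) (hu1 : 1 ≤ u) (huk : u ≤ k - 1)
    (F : Type) [Field F] [Fintype F] (hF : Fintype.card F = q)
    (S : Submodule F (Fin k → F)) (hS : Module.finrank F S = u)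
    (G : Matrix (Fin k) (Fin n) F)
    (hinj : Function.Injective fun c : Fin n => (fun r => G r c))
    (hran : Set.range (fun c : Fin n => (fun r => G r c)) = (S : Set (Fin k → F))ᶜ)
    (hn : n = q ^ k - q ^ u)
    (j : ℕ) (hj1 : 1 ≤ j) (hjk : j ≤ k) :
    (sInf {w | ∃ D : Submodule F (Fin n → F),
        D ≤ LinearMap.range G.vecMulLinear ∧ Module.finrank F D = j ∧ suppWeight D = w} : ℤ)
      = (q : ℤ) ^ k - (q : ℤ) ^ u - (q : ℤ) ^ (k - j) + (q : ℤ) ^ (u - j) :=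
  stmt_8_general q k n u huk F hF S hS G hinj hran j hj1 hjk
end
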